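/- The fixed point of the morphism f(0)=01, f(1)=21, f(2)=03, f(3)=23 starting from 0 is square-free, and hence there exists an infinite Dean word. -/
import Mathlib


def SqFree {α : Type*} (w : List α) : Prop :=
  ∀ v : List α, v ≠ [] → ¬ (v ++ v) <:+: w

def Reduced (w : List (Fin 4)) : Prop :=
  ∀ p ∈ ([[0,2],[2,0],[1,3],[3,1]] : List (List (Fin 4))), ¬ p <:+: w

def DeanWord (w : List (Fin 4)) : Prop := Reduced w ∧ SqFree w

def IFactor {α : Type*} (v : List α) (w : ℕ → α) : Prop :=
  ∃ i, v = (List.range v.length).map fun k => w (i + k)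

def ISqFree {α : Type*} (w : ℕ → α) : Prop :=
  ∀ v : List α, v ≠ [] → ¬ IFactor (v ++ v) w

def IReduced (w : ℕ → Fin 4) : Prop :=
  ∀ p ∈ ([[0,2],[2,0],[1,3],[3,1]] : List (List (Fin 4))), ¬ IFactor p w

def IDean (w : ℕ → Fin 4) : Prop := IReduced w ∧ ISqFree w

def f : Fin 4 → List (Fin 4) := ![[0,1],[2,1],[0,3],[2,3]]

/-- The fixed point `f^ω(0)`: for a 2-uniform morphism, letter `n` of the fixed
point is letter `n % 2` of the image of letter `n / 2`. -/
def D : ℕ → Fin 4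
  | 0 => 0
  | n + 1 => (f (D ((n + 1) / 2))).getD ((n + 1) % 2) 0
decreasing_by exact Nat.div_lt_self (Nat.succ_pos n) one_lt_two

def u (n : ℕ) : Bool :=
  if h : n % 2 = 1 then u (n / 2) else decide ((n / 2) % 2 = 1)
decreasing_by exact Nat.div_lt_self (by omega) one_lt_two

lemma u_even (t : ℕ) : u (2 * t) = decide (t % 2 = 1) := by
  rw [u]
  simp [Nat.mul_div_cancel_left, Nat.mul_mod_right]

lemma u_odd (t : ℕ) : u (2 * t + 1) = u t := by
  rw [u]
  simp [Nat.mul_add_mod, Nat.mul_add_div]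

lemma D_eq (n : ℕ) (h : 0 < n) : D n = (f (D (n / 2))).getD (n % 2) 0 := by
  cases n with
  | zero => omega
  | succ m => rw [D]

lemma D_spec (n : ℕ) : D (2*n) = (if n % 2 = 0 then (0:Fin 4) else 2) ∧
    D (2*n+1) = (if u n then (3:Fin 4) else 1) := by
  induction n using Nat.strong_induction_on with
  | _ n ih =>
    have heven : D (2*n) = (if n % 2 = 0 then (0:Fin 4) else 2) := by
      cases n with
      | zero => simp [D]
      | succ m =>
        have e1 : (2*(m+1))/2 = m+1 := by omega
        have e2 : (2*(m+1))%2 = 0 := by omega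
        have h1 : D (2*(m+1)) = (f (D (m+1))).getD 0 0 := by
          rw [D_eq _ (by omega), e1, e2]
        rcases Nat.even_or_odd (m+1) with ⟨t,ht⟩ | ⟨t,ht⟩
        · have ht' : m + 1 = 2 * t := by omega
          have hD := (ih t (by omega)).1
          rw [h1, ht', hD, if_pos (by omega : (2*t) % 2 = 0)]
          rcases Nat.mod_two_eq_zero_or_one t with h | h
          · rw [if_pos h]; decide
          · rw [if_neg (by omega)]; decide
        · have ht' : m + 1 = 2 * t + 1 := by omega
          have hD := (ih t (by omega)).2
          rw [h1, ht', hD, if_neg (by omega : ¬ (2*t+1) % 2 = 0)]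
          cases hu : u t <;> simp only [Bool.false_eq_true, if_true, if_false] <;> decide
    refine ⟨heven, ?_⟩
    have e1 : (2*n+1)/2 = n := by omega
    have e2 : (2*n+1)%2 = 1 := by omega
    have h1 : D (2*n+1) = (f (D n)).getD 1 0 := by
      rw [D_eq _ (by omega), e1, e2]
    cases n with
    | zero => rw [h1, u_even 0]; simp [D]; decide
    | succ m =>
      rcases Nat.even_or_odd (m+1) with ⟨t,ht⟩ | ⟨t,ht⟩
      · have ht' : m + 1 = 2 * t := by omega
        have hD := (ih t (by omega)).1
        rw [h1, ht', hD, u_even]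
        rcases Nat.mod_two_eq_zero_or_one t with h | h
        · rw [if_pos h]; simp only [h]; decide
        · rw [if_neg (by omega)]; simp only [h]; decide
      · have ht' : m + 1 = 2 * t + 1 := by omega
        have hD := (ih t (by omega)).2
        rw [h1, ht', hD, u_odd]
        cases hu : u t <;> simp only [Bool.false_eq_true, if_true, if_false] <;> decide

lemma D_even (n : ℕ) : D (2*n) = (if n % 2 = 0 then (0:Fin 4) else 2) := (D_spec n).1
lemma D_odd (n : ℕ) : D (2*n+1) = (if u n then (3:Fin 4) else 1) := (D_spec n).2

lemma D_parity (n : ℕ) : (D n).val % 2 = n % 2 := by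
  rcases Nat.even_or_odd n with ⟨t,ht⟩ | ⟨t,ht⟩
  · have hn : n = 2*t := by omega
    rw [hn, D_even]
    rcases Nat.mod_two_eq_zero_or_one t with h | h <;> simp [h] <;> omega
  · have hn : n = 2*t+1 := by omega
    rw [hn, D_odd]
    cases u t <;> simp <;> omega

lemma u_no_even_square : ∀ s : ℕ, s % 2 = 0 → 1 ≤ s →
    ∀ m0 : ℕ, (∀ j < s, u (m0 + j) = u (m0 + s + j)) → False := by
  intro s
  induction s using Nat.strong_induction_on with
  | _ s ih =>
    intro hs2 hs1 m0 hsq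
    obtain ⟨r, rfl⟩ : ∃ r, s = 2 * r := ⟨s/2, by omega⟩
    have hr1 : 1 ≤ r := by omega
    -- even position in window: 2t with t = (m0+1)/2, 2t ∈ {m0, m0+1}
    set t := (m0 + 1) / 2 with htdef
    have hj : 2 * t - m0 < 2 * r := by omega
    have h1 := hsq (2 * t - m0) hj
    have e1 : m0 + (2 * t - m0) = 2 * t := by omega
    have e2 : m0 + 2 * r + (2 * t - m0) = 2 * (t + r) := by omega
    rw [e1, e2, u_even, u_even] at h1
    have hr2 : r % 2 = 0 := by
      by_contra h
      rcases Nat.mod_two_eq_zero_or_one t with ht | ht <;>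
        simp [ht, (by omega : (t + r) % 2 = 1 - t % 2)] at h1 <;> omega
    -- odd positions: t0 = m0/2, for j < r : u (t0+j) = u (t0+j+r)
    have hodd : ∀ j < r, u (m0/2 + j) = u (m0/2 + r + j) := by
      intro j hjr
      have hk : 2 * (m0/2 + j) + 1 - m0 < 2 * r := by omega
      have h2 := hsq (2 * (m0/2 + j) + 1 - m0) hk
      have e3 : m0 + (2 * (m0/2 + j) + 1 - m0) = 2 * (m0/2 + j) + 1 := by omega
      have e4 : m0 + 2*r + (2 * (m0/2 + j) + 1 - m0) = 2 * (m0/2 + r + j) + 1 := by omega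
      rw [e3, e4, u_odd, u_odd] at h2
      exact h2
    exact ih r (by omega) hr2 hr1 (m0/2) hodd

lemma D_no_square : ∀ i p : ℕ, 1 ≤ p → (∀ k < p, D (i + k) = D (i + p + k)) → False := by
  intro i p hp hsq
  -- p is even
  have hpe : p % 2 = 0 := by
    have h0 := hsq 0 (by omega)
    have := D_parity i
    have h2 := D_parity (i + p)
    rw [show i + 0 = i by ring, show i + p + 0 = i + p by ring] at h0
    rw [h0] at this
    omega
  obtain ⟨q, rfl⟩ : ∃ q, p = 2 * q := ⟨p/2, by omega⟩
  have hq1 : 1 ≤ q := by omega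
  -- q is even, via an even position 2t ∈ {i, i+1}
  set t := (i + 1) / 2 with htdef
  have h1 := hsq (2 * t - i) (by omega)
  have e1 : i + (2 * t - i) = 2 * t := by omega
  have e2 : i + 2 * q + (2 * t - i) = 2 * (t + q) := by omega
  rw [e1, e2, D_even, D_even] at h1
  have hq2 : q % 2 = 0 := by
    by_contra h
    have htq : (t + q) % 2 = 1 - t % 2 := by omega
    rcases Nat.mod_two_eq_zero_or_one t with ht | ht <;>
      rw [ht, htq] at h1 <;> simp [ht] at h1 <;> exact absurd h1 (by decide)
  -- odd positions give a u-square of period q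
  have hodd : ∀ j < q, u (i/2 + j) = u (i/2 + q + j) := by
    intro j hjq
    have hk : 2 * (i/2 + j) + 1 - i < 2 * q := by omega
    have h2 := hsq (2 * (i/2 + j) + 1 - i) hk
    have e3 : i + (2 * (i/2 + j) + 1 - i) = 2 * (i/2 + j) + 1 := by omega
    have e4 : i + 2*q + (2 * (i/2 + j) + 1 - i) = 2 * (i/2 + q + j) + 1 := by omega
    rw [e3, e4, D_odd, D_odd] at h2
    cases hu1 : u (i/2 + j) <;> cases hu2 : u (i/2 + q + j) <;>
      rw [hu1, hu2] at h2 <;> simp_all <;> exact absurd h2 (by decide)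
  exact u_no_even_square q hq2 hq1 (i/2) hodd

lemma ISqFree_D : ISqFree D := by
  intro v hv ⟨i, h⟩
  set p := v.length with hp
  have hp1 : 1 ≤ p := by
    cases v with
    | nil => exact absurd rfl hv
    | cons a l => simp [hp]
  have hlen : (v ++ v).length = 2 * p := by simp [hp]; ring
  have hget : ∀ j (hj : j < (v ++ v).length), (v ++ v)[j] = D (i + j) := by
    intro j hj
    have := List.getElem_of_eq h hj
    simpa using this
  apply D_no_square i p hp1
  intro k hk
  have hb1 : k < (v ++ v).length := by omega
  have hb2 : p + k < (v ++ v).length := by omega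
  have h1 := hget k hb1
  have h2 := hget (p + k) hb2
  rw [List.getElem_append_left (by omega)] at h1
  rw [List.getElem_append_right (by omega)] at h2
  simp only [show p + k - v.length = k from by omega] at h2
  have := h1.symm.trans h2
  rw [show i + (p + k) = i + p + k by omega] at this
  exact this

lemma IReduced_D : IReduced D := by
  intro pat hpat ⟨i, h⟩
  have hmem : pat = [0,2] ∨ pat = [2,0] ∨ pat = [1,3] ∨ pat = [3,1] := by
    simpa using hpat
  have hlen : pat.length = 2 := by rcases hmem with rfl | rfl | rfl | rfl <;> rfl
  have h0 : pat[0]'(by omega) = D i := by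
    have := List.getElem_of_eq h (show (0:ℕ) < pat.length by omega)
    simpa using this
  have h1 : pat[1]'(by omega) = D (i+1) := by
    have := List.getElem_of_eq h (show (1:ℕ) < pat.length by omega)
    simpa using this
  have p0 := D_parity i
  have p1 := D_parity (i+1)
  rw [← h0] at p0
  rw [← h1] at p1
  rcases hmem with rfl | rfl | rfl | rfl <;> simp at p0 p1 <;> omega


theorem stmt2 : ISqFree D ∧ ∃ w : ℕ → Fin 4, IDean w :=
  ⟨ISqFree_D, D, IReduced_D, ISqFree_D⟩
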